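/- Let N, K be positive natural numbers, let η > 0, let H_S^(r) be an N×N complex Hermitian matrix, and let ψ : [0,∞) → ℂ^N be a differentiable function satisfying for all t ≥ 0 the renormalized integro-differential equation ψ'(t) = −i (1 + iη/2)^{−1} H_S^(r) ψ(t) − (1 + iη/2)^{−1} ∫₀ᵗ G_Lorentz(t−s) ψ(s) ds. Define for each j = 1,…,K the function φ_j(t) = −i g_j ∫₀ᵗ exp(−(γ_j/2 + i ε_j)(t−s)) ψ(s) ds. Then the (K+1)N-dimensional vector ψ̃(t) = (ψ(t), φ_1(t), …, φ_K(t)) satisfies ψ̃'(t) = −i H_eff^η ψ̃(t) with initial condition ψ̃(0) = (ψ(0), 0, …, 0), where H_eff^η is the (K+1)N × (K+1)N block matrix whose (0,0) block is (1 + iη/2)^{−1} H_S^(r), whose (0,j) block is (1 + iη/2)^{−1} g_j I_N, whose (j,0) block is g_j I_N, whose (j,j) block is (ε_j − i γ_j/2) I_N for j = 1,…,K, and whose remaining blocks are zero. -/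

import Mathlib

open MeasureTheory Matrix

/-- The reservoir correlation function for a positive combination of `K` Lorentz peaks:
`G_Lorentz(t) = Σ_j g_j² exp(−(γ_j/2)|t| − i ε_j t)`. -/
noncomputable def GLorentz (K : ℕ) (g γ ε : Fin K → ℝ) (t : ℝ) : ℂ :=
  ∑ j, (g j : ℂ) ^ 2 *
    Complex.exp (-((γ j : ℂ) / 2) * (|t| : ℝ) - Complex.I * (ε j : ℂ) * (t : ℂ))

/-- The effective non-Hermitian Hamiltonian `H_eff^η` with renormalized Ohmic contribution:
the `(K+1)N × (K+1)N` block matrix whose `(0,0)` block is `(1 + iη/2)⁻¹ H_S^(r)`, whose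
`(0,j)` block is `(1 + iη/2)⁻¹ g_j I_N`, whose `(j,0)` block is `g_j I_N`, whose `(j,j)`
block is `(ε_j − i γ_j/2) I_N`, and whose remaining blocks are zero. -/
noncomputable def HeffEta (N K : ℕ) (η : ℝ) (HS : Matrix (Fin N) (Fin N) ℂ)
    (g γ ε : Fin K → ℝ) :
    Matrix (Fin N ⊕ Fin K × Fin N) (Fin N ⊕ Fin K × Fin N) ℂ :=
  Matrix.fromBlocks ((1 + Complex.I * (η : ℂ) / 2)⁻¹ • HS)
    (fun a p => if a = p.2 then (1 + Complex.I * (η : ℂ) / 2)⁻¹ * (g p.1 : ℂ) else 0)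
    (fun p a => if p.2 = a then (g p.1 : ℂ) else 0)
    (fun p q => if p = q then (ε p.1 : ℂ) - Complex.I * ((γ p.1 : ℂ) / 2) else 0)

/-!
With `μ_j = γ_j/2 + iε_j`, the Lorentz kernel for `s ≤ t` is `Σ_j g_j² e^{-μ_j(t-s)}`, so the
memory integral splits as `Σ_j g_j² V_j` with `V_j(t) = ∫₀ᵗ e^{-μ_j(t-s)} ψ(s) ds`. Writing
`V_j(t) = e^{-μ_j t} ∫₀ᵗ e^{μ_j s} ψ(s) ds`, the product rule and the fundamental theorem of
calculus give `V_j' = ψ - μ_j V_j`. Since `φ_j = -i g_j V_j`, these two facts are exactly the rows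
of `ψ̃' = -i H_eff^η ψ̃`.
-/

open Complex Set

theorem hasDerivWithinAt_integral_Ici {E : Type*} [NormedAddCommGroup E] [NormedSpace ℝ E]
    [CompleteSpace E] {f : ℝ → E} {a t : ℝ} (hf : ContinuousOn f (Ici a)) (ht : a ≤ t) :
    HasDerivWithinAt (fun u => ∫ s in a..u, f s) (f t) (Ici a) t := by
  have hint : IntervalIntegrable f volume a t :=
    (hf.mono (by rw [uIcc_of_le ht]; exact Icc_subset_Ici_self)).intervalIntegrable
  have hmeas : AEStronglyMeasurable f (volume.restrict (Ici a)) :=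
    hf.aestronglyMeasurable measurableSet_Ici
  rcases ht.eq_or_lt with rfl | hat
  · exact intervalIntegral.integral_hasDerivWithinAt_right hint
      ⟨_, Filter.mem_of_superset self_mem_nhdsWithin Ioi_subset_Ici_self, hmeas⟩
      ((hf a self_mem_Ici).mono Ioi_subset_Ici_self)
  · have hmem : Ici a ∈ nhds t := Ici_mem_nhds hat
    exact (intervalIntegral.integral_hasDerivAt_right hint ⟨_, hmem, hmeas⟩
      ((hf t ht).continuousAt hmem)).hasDerivWithinAt

section ExpConvolution

variable {E : Type*} [NormedAddCommGroup E] [NormedSpace ℂ E]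

noncomputable def expConvolution (μ : ℂ) (f : ℝ → E) (t : ℝ) : E :=
  ∫ s in (0:ℝ)..t, exp (-μ * ((t - s : ℝ) : ℂ)) • f s

theorem expConvolution_zero (μ : ℂ) (f : ℝ → E) : expConvolution μ f 0 = 0 :=
  intervalIntegral.integral_same

theorem expConvolution_eq_smul_integral (μ : ℂ) (f : ℝ → E) (t : ℝ) :
    expConvolution μ f t = exp (-μ * t) • ∫ s in (0:ℝ)..t, exp (μ * s) • f s := by
  rw [expConvolution, ← intervalIntegral.integral_smul]
  congr 1 with s
  rw [smul_smul, ← exp_add]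
  push_cast
  ring_nf

theorem hasDerivWithinAt_expConvolution [CompleteSpace E] (μ : ℂ) {f : ℝ → E}
    (hf : ContinuousOn f (Ici 0)) {t : ℝ} (ht : 0 ≤ t) :
    HasDerivWithinAt (expConvolution μ f) (f t - μ • expConvolution μ f t) (Ici 0) t := by
  have hexp : HasDerivAt (fun u : ℝ => exp (-μ * u)) (exp (-μ * t) * -μ) t := by
    simpa using ((hasDerivAt_id t).ofReal_comp.const_mul (-μ)).cexp
  have hcont : ContinuousOn (fun s : ℝ => exp (μ * s) • f s) (Ici 0) :=
    (Continuous.continuousOn (by fun_prop)).smul hf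
  have hprod := (hexp.hasDerivWithinAt (s := Ici 0)).smul (hasDerivWithinAt_integral_Ici hcont ht)
  rw [funext (expConvolution_eq_smul_integral μ f)]
  refine hprod.congr_deriv ?_
  have hinv : exp (-μ * t) * exp (μ * t) = 1 := by
    rw [← exp_add, neg_mul, neg_add_cancel, exp_zero]
  rw [smul_smul, hinv, one_smul]
  module

end ExpConvolution

theorem GLorentz_of_nonneg {K : ℕ} (g γ ε : Fin K → ℝ) {t : ℝ} (ht : 0 ≤ t) :
    GLorentz K g γ ε t = ∑ j, (g j : ℂ) ^ 2 * exp (-((γ j : ℂ) / 2 + I * ε j) * t) := by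
  simp only [GLorentz, abs_of_nonneg ht]
  congr! 3
  ring

theorem integral_GLorentz_sub_smul {E : Type*} [NormedAddCommGroup E] [NormedSpace ℂ E]
    {K : ℕ} (g γ ε : Fin K → ℝ) {ψ : ℝ → E} {t : ℝ} (hψ : ContinuousOn ψ (Icc 0 t))
    (ht : 0 ≤ t) :
    ∫ s in (0:ℝ)..t, GLorentz K g γ ε (t - s) • ψ s =
      ∑ j, ((g j : ℂ) ^ 2) • expConvolution ((γ j : ℂ) / 2 + I * ε j) ψ t := by
  have hint : ∀ j : Fin K, IntervalIntegrable (fun s : ℝ => ((g j : ℂ) ^ 2 *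
      exp (-((γ j : ℂ) / 2 + I * ε j) * ((t - s : ℝ) : ℂ))) • ψ s) volume 0 t := fun j =>
    ((Continuous.continuousOn (by fun_prop)).smul (by rwa [uIcc_of_le ht])).intervalIntegrable
  simp only [expConvolution, ← intervalIntegral.integral_smul, smul_smul]
  rw [← intervalIntegral.integral_finsetSum fun j _ => hint j]
  refine intervalIntegral.integral_congr fun s hs => ?_
  rw [uIcc_of_le ht] at hs
  simp only [GLorentz_of_nonneg g γ ε (sub_nonneg.2 hs.2), Finset.sum_smul]

theorem HeffEta_mulVec_inl {N K : ℕ} (η : ℝ) (HS : Matrix (Fin N) (Fin N) ℂ)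
    (g γ ε : Fin K → ℝ) (x : Fin N → ℂ) (y : Fin K × Fin N → ℂ) (a : Fin N) :
    (HeffEta N K η HS g γ ε *ᵥ Sum.elim x y) (Sum.inl a) =
      (1 + I * η / 2)⁻¹ * ((HS *ᵥ x) a + ∑ j, g j * y (j, a)) := by
  simp [HeffEta, mulVec, dotProduct, fromBlocks, Fintype.sum_prod_type, Finset.mul_sum, mul_add,
    mul_assoc]

theorem HeffEta_mulVec_inr {N K : ℕ} (η : ℝ) (HS : Matrix (Fin N) (Fin N) ℂ)
    (g γ ε : Fin K → ℝ) (x : Fin N → ℂ) (y : Fin K × Fin N → ℂ) (p : Fin K × Fin N) :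
    (HeffEta N K η HS g γ ε *ᵥ Sum.elim x y) (Sum.inr p) =
      g p.1 * x p.2 + (ε p.1 - I * (γ p.1 / 2)) * y p := by
  simp [HeffEta, mulVec, dotProduct, fromBlocks]

theorem markovian_dilation_ohmic_plus_lorentz_general
    (N K : ℕ) (η : ℝ)
    (HS : Matrix (Fin N) (Fin N) ℂ)
    (g γ ε : Fin K → ℝ)
    (ψ : ℝ → Fin N → ℂ)
    (hψ : ∀ t : ℝ, 0 ≤ t →
      HasDerivWithinAt ψ
        ((-Complex.I) • (1 + Complex.I * (η : ℂ) / 2)⁻¹ • HS.mulVec (ψ t) -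
          (1 + Complex.I * (η : ℂ) / 2)⁻¹ •
            ∫ s in (0:ℝ)..t, GLorentz K g γ ε (t - s) • ψ s)
        (Set.Ici 0) t)
    (φ : Fin K → ℝ → Fin N → ℂ)
    (hφ : ∀ j t, φ j t =
      (-Complex.I * (g j : ℂ)) •
        ∫ s in (0:ℝ)..t,
          Complex.exp (-((γ j : ℂ) / 2 + Complex.I * (ε j : ℂ)) * ((t - s : ℝ) : ℂ)) • ψ s)
    (ψtilde : ℝ → (Fin N ⊕ Fin K × Fin N) → ℂ)
    (hψtilde : ∀ t, ψtilde t = Sum.elim (ψ t) fun p => φ p.1 t p.2) :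
    ψtilde 0 = Sum.elim (ψ 0) 0 ∧
    ∀ t : ℝ, 0 ≤ t →
      HasDerivWithinAt ψtilde
        ((-Complex.I) • (HeffEta N K η HS g γ ε).mulVec (ψtilde t)) (Set.Ici 0) t := by
  have hψc : ContinuousOn ψ (Ici 0) := fun t ht => (hψ t ht).continuousWithinAt
  obtain rfl : φ = fun j => (-I * g j) • expConvolution ((γ j : ℂ) / 2 + I * ε j) ψ :=
    funext fun j => funext (hφ j)
  obtain rfl := funext hψtilde
  refine ⟨?_, fun t ht => hasDerivWithinAt_pi.2 ?_⟩
  · ext (a | p) <;> simp [expConvolution_zero]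
  rintro (a | ⟨j, a⟩)
  · refine (hasDerivWithinAt_pi.1 (hψ t ht) a).congr_deriv ?_
    simp only [Pi.smul_apply, Pi.sub_apply, smul_eq_mul, HeffEta_mulVec_inl,
      integral_GLorentz_sub_smul g γ ε (hψc.mono Icc_subset_Ici_self) ht, Finset.sum_apply]
    set V := fun j => expConvolution ((γ j : ℂ) / 2 + I * ε j) ψ t a
    have hsum : ∑ j, (g j : ℂ) * (-I * g j * V j) = -I * ∑ j, (g j : ℂ) ^ 2 * V j := by
      rw [Finset.mul_sum]
      exact Finset.sum_congr rfl fun j _ => by ring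
    rw [hsum]
    linear_combination (-((1 + I * η / 2)⁻¹ * ∑ j, (g j : ℂ) ^ 2 * V j)) * I_sq
  · refine (hasDerivWithinAt_pi.1 ((hasDerivWithinAt_expConvolution
      ((γ j : ℂ) / 2 + I * ε j) hψc ht).const_smul (-I * g j)) a).congr_deriv ?_
    simp only [Pi.smul_apply, Pi.sub_apply, smul_eq_mul, HeffEta_mulVec_inr]
    linear_combination
      (I * g j * (γ j / 2) * expConvolution ((γ j : ℂ) / 2 + I * ε j) ψ t a) * I_sq

/-- If `ψ` satisfies the renormalized integro-differential equation
`ψ'(t) = −i(1 + iη/2)⁻¹ H_S^(r) ψ(t) − (1 + iη/2)⁻¹ ∫₀ᵗ G_Lorentz(t−s) ψ(s) ds` and the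
pseudomodes are `φ_j(t) = −i g_j ∫₀ᵗ e^{−(γ_j/2 + iε_j)(t−s)} ψ(s) ds`, then
`ψ̃ = (ψ, φ_1, …, φ_K)` satisfies `ψ̃'(t) = −i H_eff^η ψ̃(t)` with
`ψ̃(0) = (ψ(0), 0, …, 0)`. -/
theorem markovian_dilation_ohmic_plus_lorentz
    (N K : ℕ) (hN : 0 < N) (hK : 0 < K) (η : ℝ) (hη : 0 < η)
    (HS : Matrix (Fin N) (Fin N) ℂ) (hHS : HS.IsHermitian)
    (g γ ε : Fin K → ℝ) (hg : ∀ j, 0 < g j) (hγ : ∀ j, 0 < γ j)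
    (ψ : ℝ → Fin N → ℂ)
    (hψ : ∀ t : ℝ, 0 ≤ t →
      HasDerivWithinAt ψ
        ((-Complex.I) • (1 + Complex.I * (η : ℂ) / 2)⁻¹ • HS.mulVec (ψ t) -
          (1 + Complex.I * (η : ℂ) / 2)⁻¹ •
            ∫ s in (0:ℝ)..t, GLorentz K g γ ε (t - s) • ψ s)
        (Set.Ici 0) t)
    (φ : Fin K → ℝ → Fin N → ℂ)
    (hφ : ∀ j t, φ j t =
      (-Complex.I * (g j : ℂ)) •
        ∫ s in (0:ℝ)..t,
          Complex.exp (-((γ j : ℂ) / 2 + Complex.I * (ε j : ℂ)) * ((t - s : ℝ) : ℂ)) • ψ s)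
    (ψtilde : ℝ → (Fin N ⊕ Fin K × Fin N) → ℂ)
    (hψtilde : ∀ t, ψtilde t = Sum.elim (ψ t) fun p => φ p.1 t p.2) :
    ψtilde 0 = Sum.elim (ψ 0) 0 ∧
    ∀ t : ℝ, 0 ≤ t →
      HasDerivWithinAt ψtilde
        ((-Complex.I) • (HeffEta N K η HS g γ ε).mulVec (ψtilde t)) (Set.Ici 0) t :=
  markovian_dilation_ohmic_plus_lorentz_general N K η HS g γ ε ψ hψ φ hφ ψtilde hψtilde
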